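/- If p, p' ∈ ℝ³ with |p − p'| ≤ η and c ≥ 1, then the operator-norm difference of the velocity Jacobians satisfies ‖𝔸_c(p) − 𝔸_c(p')‖ ≤ C η / (c·γ_c(p)²) for a constant C independent of c, p, p' (assuming η ≤ 1). -/

import Mathlib

noncomputable section

/-- The relativistic Lorentz factor `γ_c(p) = √(1 + |p|²/c²)`. -/
def gam (c : ℝ) (p : EuclideanSpace ℝ (Fin 3)) : ℝ := Real.sqrt (1 + ‖p‖ ^ 2 / c ^ 2)

/-- The matrix `𝔸_c(p) = (1/γ_c(p)) I₃ − (1/γ_c(p)³) (p_i p_j / c²)_{i,j}`. -/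
def Ac (c : ℝ) (p : EuclideanSpace ℝ (Fin 3)) : Matrix (Fin 3) (Fin 3) ℝ :=
  (gam c p)⁻¹ • (1 : Matrix (Fin 3) (Fin 3) ℝ) -
    ((gam c p) ^ 3)⁻¹ • Matrix.of fun i j => p i * p j / c ^ 2

/-- The operator (Euclidean `ℓ²`) norm of a real 3×3 matrix. -/
def opNorm (M : Matrix (Fin 3) (Fin 3) ℝ) : ℝ :=
  ‖Matrix.toEuclideanCLM (𝕜 := ℝ) M‖

/-!
With `β = p / (c γ)`, which has `|β| ≤ 1`, the matrix is `𝔸_c(p) = γ⁻¹ (I − β βᵀ)`, and the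
rank-one matrix `β βᵀ` has operator norm `|β|²`. Since `γ` is `1/c`-Lipschitz in `p`, both `γ⁻¹`
and `β` move by `O(|p − p'| / (c γ))`, and `γ_c(p) ≤ 2 γ_c(p')` once `|p − p'| ≤ c`.
-/

open Matrix
open scoped Matrix.Norms.L2Operator

theorem Matrix.l2_opNorm_vecMulVec {𝕜 n : Type*} [RCLike 𝕜] [Fintype n] [DecidableEq n]
    (x y : EuclideanSpace 𝕜 n) : ‖vecMulVec x (star y)‖ = ‖x‖ * ‖y‖ := by
  rw [← InnerProductSpace.symm_toEuclideanLin_rankOne, l2_opNorm_def, LinearEquiv.trans_apply,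
    LinearEquiv.apply_symm_apply]
  exact InnerProductSpace.norm_rankOne x y

section Real

variable {n : Type*} [Fintype n] [DecidableEq n]

theorem Matrix.l2_opNorm_vecMulVec_real (x y : EuclideanSpace ℝ n) :
    ‖vecMulVec x y‖ = ‖x‖ * ‖y‖ := by
  simpa using l2_opNorm_vecMulVec x y

theorem Matrix.l2_opNorm_one_sub_vecMulVec_self_le [Nonempty n] (u : EuclideanSpace ℝ n) :
    ‖1 - vecMulVec u u‖ ≤ 1 + ‖u‖ ^ 2 := by
  calc ‖1 - vecMulVec u u‖ ≤ ‖(1 : Matrix n n ℝ)‖ + ‖vecMulVec u u‖ := norm_sub_le _ _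
    _ = 1 + ‖u‖ ^ 2 := by rw [norm_one, l2_opNorm_vecMulVec_real, sq]

theorem Matrix.l2_opNorm_vecMulVec_self_sub_le (u v : EuclideanSpace ℝ n) :
    ‖vecMulVec u u - vecMulVec v v‖ ≤ ‖u - v‖ * (‖u‖ + ‖v‖) := by
  have h : vecMulVec u u - vecMulVec v v = vecMulVec (u - v) u + vecMulVec v (u - v) := by
    simp only [WithLp.ofLp_sub, sub_vecMulVec, vecMulVec_sub]
    abel
  calc ‖vecMulVec u u - vecMulVec v v‖
      ≤ ‖vecMulVec (u - v) u‖ + ‖vecMulVec v (u - v)‖ := h ▸ norm_add_le _ _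
    _ = ‖u - v‖ * (‖u‖ + ‖v‖) := by
      rw [l2_opNorm_vecMulVec_real, l2_opNorm_vecMulVec_real]
      ring

end Real

theorem Real.abs_sqrt_one_add_sq_sub_sqrt_one_add_sq_le (a b : ℝ) :
    |√(1 + a ^ 2) - √(1 + b ^ 2)| ≤ |a - b| := by
  have hs := Real.sq_sqrt (show 0 ≤ 1 + a ^ 2 by positivity)
  have ht := Real.sq_sqrt (show 0 ≤ 1 + b ^ 2 by positivity)
  have hst : 1 + a * b ≤ √(1 + a ^ 2) * √(1 + b ^ 2) := by
    rw [← Real.sqrt_mul (by positivity)]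
    exact Real.le_sqrt_of_sq_le (by nlinarith [sq_nonneg (a - b)])
  exact sq_le_sq.mp (by nlinarith)

section Lorentz

variable {c : ℝ}

theorem one_le_gam (c : ℝ) (p : EuclideanSpace ℝ (Fin 3)) : 1 ≤ gam c p :=
  Real.one_le_sqrt.mpr (le_add_of_nonneg_right (by positivity))

theorem gam_pos (c : ℝ) (p : EuclideanSpace ℝ (Fin 3)) : 0 < gam c p :=
  one_pos.trans_le (one_le_gam c p)

theorem sq_gam (c : ℝ) (p : EuclideanSpace ℝ (Fin 3)) : gam c p ^ 2 = 1 + ‖p‖ ^ 2 / c ^ 2 :=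
  Real.sq_sqrt (by positivity)

theorem norm_le_mul_gam (hc : 0 < c) (p : EuclideanSpace ℝ (Fin 3)) : ‖p‖ ≤ c * gam c p := by
  have hγ := gam_pos c p
  refine le_of_pow_le_pow_left₀ two_ne_zero (by positivity) ?_
  rw [mul_pow, sq_gam, mul_add, mul_div_cancel₀ _ (by positivity)]
  nlinarith

theorem abs_gam_sub_gam_le (hc : 0 < c) (p p' : EuclideanSpace ℝ (Fin 3)) :
    |gam c p - gam c p'| ≤ ‖p - p'‖ / c := by
  have h := Real.abs_sqrt_one_add_sq_sub_sqrt_one_add_sq_le (‖p‖ / c) (‖p'‖ / c)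
  rw [div_pow, div_pow, div_sub_div_same, abs_div, abs_of_pos hc] at h
  exact h.trans (div_le_div_of_nonneg_right (abs_norm_sub_norm_le p p') hc.le)

/-- The velocity `v = p / γ_c(p)` measured in units of `c`. -/
def beta (c : ℝ) (p : EuclideanSpace ℝ (Fin 3)) : EuclideanSpace ℝ (Fin 3) :=
  (c * gam c p)⁻¹ • p

theorem Ac_eq_smul_one_sub_vecMulVec (c : ℝ) (p : EuclideanSpace ℝ (Fin 3)) :
    Ac c p = (gam c p)⁻¹ • (1 - vecMulVec (beta c p) (beta c p)) := by
  have := (gam_pos c p).ne'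
  ext i j
  simp only [Ac, beta, Matrix.sub_apply, Matrix.smul_apply, of_apply, vecMulVec_apply,
    PiLp.smul_apply, smul_eq_mul]
  ring

theorem norm_beta_le_one (hc : 0 < c) (p : EuclideanSpace ℝ (Fin 3)) : ‖beta c p‖ ≤ 1 := by
  have hγ := gam_pos c p
  rw [beta, norm_smul, Real.norm_of_nonneg (by positivity), inv_mul_le_one₀ (by positivity)]
  exact norm_le_mul_gam hc p

theorem norm_beta_sub_beta_le (hc : 0 < c) (p p' : EuclideanSpace ℝ (Fin 3)) :
    ‖beta c p - beta c p'‖ ≤ 2 * ‖p - p'‖ / (c * gam c p) := by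
  have hγ := gam_pos c p
  have hγ' := gam_pos c p'
  have h : beta c p - beta c p' =
      (gam c p)⁻¹ • (c⁻¹ • (p - p') + (gam c p' - gam c p) • beta c p') := by
    ext i
    simp only [beta, PiLp.sub_apply, PiLp.add_apply, PiLp.smul_apply, smul_eq_mul]
    field_simp
    ring
  calc ‖beta c p - beta c p'‖
      ≤ (gam c p)⁻¹ * (c⁻¹ * ‖p - p'‖ + |gam c p' - gam c p| * ‖beta c p'‖) := by
        rw [h, norm_smul, Real.norm_of_nonneg (by positivity)]
        gcongr
        refine (norm_add_le _ _).trans ?_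
        rw [norm_smul, norm_smul, Real.norm_of_nonneg (by positivity), Real.norm_eq_abs]
    _ ≤ (gam c p)⁻¹ * (c⁻¹ * ‖p - p'‖ + ‖p - p'‖ / c * 1) := by
        gcongr
        · rw [abs_sub_comm]; exact abs_gam_sub_gam_le hc p p'
        · exact norm_beta_le_one hc p'
    _ = 2 * ‖p - p'‖ / (c * gam c p) := by
        field_simp
        ring

theorem abs_inv_gam_sub_inv_gam_le (hc : 0 < c) (p p' : EuclideanSpace ℝ (Fin 3)) :
    |(gam c p)⁻¹ - (gam c p')⁻¹| ≤ ‖p - p'‖ / (c * gam c p * gam c p') := by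
  have hγ := gam_pos c p
  have hγ' := gam_pos c p'
  rw [inv_sub_inv hγ.ne' hγ'.ne', abs_div, abs_of_pos (mul_pos hγ hγ'), abs_sub_comm]
  calc |gam c p - gam c p'| / (gam c p * gam c p')
      ≤ ‖p - p'‖ / c / (gam c p * gam c p') := by gcongr; exact abs_gam_sub_gam_le hc p p'
    _ = ‖p - p'‖ / (c * gam c p * gam c p') := by rw [div_div, mul_assoc]

theorem norm_Ac_sub_Ac_le (hc : 0 < c) (p p' : EuclideanSpace ℝ (Fin 3)) :
    ‖Ac c p - Ac c p'‖ ≤ 6 * ‖p - p'‖ / (c * gam c p * gam c p') := by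
  have hγ := gam_pos c p
  have hγ' := gam_pos c p'
  have h : Ac c p - Ac c p' =
      ((gam c p)⁻¹ - (gam c p')⁻¹) • (1 - vecMulVec (beta c p) (beta c p)) +
        (gam c p')⁻¹ • (vecMulVec (beta c p') (beta c p') - vecMulVec (beta c p) (beta c p)) := by
    rw [Ac_eq_smul_one_sub_vecMulVec, Ac_eq_smul_one_sub_vecMulVec]
    module
  set b := beta c p
  set b' := beta c p'
  have hb : ‖1 - vecMulVec b b‖ ≤ 2 := by
    have := norm_beta_le_one hc p
    refine (l2_opNorm_one_sub_vecMulVec_self_le b).trans ?_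
    nlinarith [norm_nonneg b]
  have hbb : ‖vecMulVec b' b' - vecMulVec b b‖ ≤ 4 * ‖p - p'‖ / (c * gam c p) := by
    refine (l2_opNorm_vecMulVec_self_sub_le b' b).trans ?_
    have : ‖b'‖ + ‖b‖ ≤ 2 := by linarith [norm_beta_le_one hc p, norm_beta_le_one hc p']
    calc ‖b' - b‖ * (‖b'‖ + ‖b‖) ≤ 2 * ‖p - p'‖ / (c * gam c p) * 2 := by
          rw [norm_sub_rev]
          gcongr
          exact norm_beta_sub_beta_le hc p p'
      _ = 4 * ‖p - p'‖ / (c * gam c p) := by ring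
  calc ‖Ac c p - Ac c p'‖
      ≤ |(gam c p)⁻¹ - (gam c p')⁻¹| * ‖1 - vecMulVec b b‖ +
          (gam c p')⁻¹ * ‖vecMulVec b' b' - vecMulVec b b‖ := by
        rw [h]
        refine (norm_add_le _ _).trans ?_
        rw [norm_smul, norm_smul, Real.norm_eq_abs, Real.norm_of_nonneg (by positivity)]
    _ ≤ ‖p - p'‖ / (c * gam c p * gam c p') * 2 +
          (gam c p')⁻¹ * (4 * ‖p - p'‖ / (c * gam c p)) := by
        gcongr
        exact abs_inv_gam_sub_inv_gam_le hc p p'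
    _ = 6 * ‖p - p'‖ / (c * gam c p * gam c p') := by
        field_simp
        ring

theorem gam_le_two_mul_gam {p p' : EuclideanSpace ℝ (Fin 3)} (hc : 0 < c)
    (h : ‖p - p'‖ ≤ c) : gam c p ≤ 2 * gam c p' := by
  have := abs_sub_le_iff.mp (abs_gam_sub_gam_le hc p p')
  have := one_le_gam c p'
  have : ‖p - p'‖ / c ≤ 1 := (div_le_one hc).mpr h
  linarith

end Lorentz

/-- If `|p − p'| ≤ η ≤ 1` and `c ≥ 1`, then
`‖𝔸_c(p) − 𝔸_c(p')‖ ≤ C η / (c γ_c(p)²)` with `C` independent of `c, p, p'`. -/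
theorem stmt18 :
    ∃ C > 0, ∀ (c η : ℝ), 1 ≤ c → 0 < η → η ≤ 1 →
      ∀ p p' : EuclideanSpace ℝ (Fin 3), ‖p - p'‖ ≤ η →
        opNorm (Ac c p - Ac c p') ≤ C * η / (c * (gam c p) ^ 2) := by
  refine ⟨12, by norm_num, fun c η hc _ hη1 p p' hpp' => ?_⟩
  have hc0 : 0 < c := one_pos.trans_le hc
  have hγ := gam_pos c p
  have hγ' : gam c p / 2 ≤ gam c p' := by
    linarith [gam_le_two_mul_gam hc0 (show ‖p - p'‖ ≤ c by linarith)]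
  calc opNorm (Ac c p - Ac c p')
      ≤ 6 * ‖p - p'‖ / (c * gam c p * gam c p') := norm_Ac_sub_Ac_le hc0 p p'
    _ ≤ 6 * η / (c * gam c p * (gam c p / 2)) := by gcongr
    _ = 12 * η / (c * gam c p ^ 2) := by field_simp; ring
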